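/- There exists C > 0 such that for all even T ∈ 2ℕ and all even n ∈ 2ℕ: 1/(C min{√n, T}) ≤ P( S_n ∈ Tℤ ) ≤ C / min{√n, T}. -/

import Mathlib

set_option maxHeartbeats 1000000


open MeasureTheory ProbabilityTheory Filter Real
open scoped ENNReal

noncomputable section

variable {Ω : Type*} [MeasurableSpace Ω]

/-- `S` is a simple random walk on `ℤ` under `P`: it starts at `0` and its increments are
i.i.d. uniform on `{-1, 1}`. -/
structure IsSRW (P : Measure Ω) (S : ℕ → Ω → ℤ) : Prop where
  prob : IsProbabilityMeasure P
  meas : ∀ n, Measurable (S n)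
  init : ∀ ω, S 0 ω = 0
  indep : iIndepFun (fun i ω => S (i + 1) ω - S i ω) P
  step_pos : ∀ i, P {ω | S (i + 1) ω - S i ω = 1} = 1 / 2
  step_neg : ∀ i, P {ω | S (i + 1) ω - S i ω = -1} = 1 / 2

/-- Successive hitting times `τ_k^T` of the interface set `Tℤ`.  The value `T = 0` encodes
`T = ∞`, since `0ℤ = {0}`. -/
def hitTime (T : ℕ) (S : ℕ → Ω → ℤ) : ℕ → Ω → ℕ
  | 0, _ => 0
  | k + 1, ω => sInf {n : ℕ | hitTime T S k ω < n ∧ (T : ℤ) ∣ S n ω}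

/-- Hamiltonian `H_{N,δ}^T`. -/
def hamiltonian (S : ℕ → Ω → ℤ) (T : ℕ) (δ : ℝ) (N : ℕ) (ω : Ω) : ℝ :=
  δ * ∑ i ∈ Finset.Icc 1 N, if (T : ℤ) ∣ S i ω then (1 : ℝ) else 0

/-- Partition function `Z_{N,δ}^T`. -/
def partitionFn (P : Measure Ω) (S : ℕ → Ω → ℤ) (T : ℕ) (δ : ℝ) (N : ℕ) : ℝ :=
  ∫ ω, Real.exp (-(hamiltonian S T δ N ω)) ∂P

/-- Polymer measure `P_{N,δ}^T`. -/
def polymer (P : Measure Ω) (S : ℕ → Ω → ℤ) (T : ℕ) (δ : ℝ) (N : ℕ) : Measure Ω :=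
  P.withDensity fun ω =>
    ENNReal.ofReal (Real.exp (-(hamiltonian S T δ N ω)) / partitionFn P S T δ N)

/-- Time of the last contact with the interfaces before time `N`, i.e. `τ_{L_N}^T`. -/
def lastContact (S : ℕ → Ω → ℤ) (T : ℕ) (N : ℕ) (ω : Ω) : ℕ :=
  sSup {t : ℕ | t ≤ N ∧ (T : ℤ) ∣ S t ω}


namespace SRW16

def w : ℕ → ℤ → ℕ
  | 0, j => if j = 0 then 1 else 0
  | n+1, j => w n (j-1) + w n (j+1)


lemma w_zero_of_lt : ∀ (n : ℕ) (j : ℤ), (j < -(n:ℤ) ∨ (n:ℤ) < j) → w n j = 0 := by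
  intro n
  induction n with
  | zero => intro j hj; simp only [w]; rw [if_neg]; omega
  | succ n ih =>
    intro j hj
    simp only [w]
    rw [ih (j-1) (by push_cast at hj ⊢; omega), ih (j+1) (by push_cast at hj ⊢; omega)]

lemma w_symm : ∀ (n : ℕ) (j : ℤ), w n (-j) = w n j := by
  intro n
  induction n with
  | zero => intro j; simp only [w]; by_cases h : j = 0 <;> simp [h, neg_eq_zero]
  | succ n ih =>
    intro j
    simp only [w]
    have h1 : -j - 1 = -(j+1) := by ring
    have h2 : -j + 1 = -(j-1) := by ring
    rw [h1, h2, ih, ih, Nat.add_comm]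

lemma w_val : ∀ (n k : ℕ), k ≤ n → w n (2*(k:ℤ) - n) = n.choose k := by
  intro n
  induction n with
  | zero => intro k hk; interval_cases k; simp [w]
  | succ n ih =>
    intro k hk
    simp only [w]
    match k with
    | 0 =>
      have h1 : 2*((0:ℕ):ℤ) - (↑(n+1)) - 1 = -(n:ℤ) + -2 := by push_cast; ring
      have h2 : 2*((0:ℕ):ℤ) - (↑(n+1)) + 1 = 2*((0:ℕ):ℤ) - (n:ℤ) := by push_cast; ring
      rw [h1, h2, ih 0 (Nat.zero_le n), w_zero_of_lt n _ (by left; omega)]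
      simp
    | (k'+1) =>
      have h1 : 2*((↑(k'+1)):ℤ) - (↑(n+1)) - 1 = 2*(k':ℤ) - (n:ℤ) := by push_cast; ring
      rw [h1, ih k' (by omega)]
      by_cases hk' : k' + 1 ≤ n
      · have h2 : 2*((↑(k'+1)):ℤ) - (↑(n+1)) + 1 = 2*((↑(k'+1)):ℤ) - (n:ℤ) := by push_cast; ring
        rw [h2, ih (k'+1) hk', Nat.choose_succ_succ]
      · have hkn : k' = n := by omega
        subst hkn
        rw [w_zero_of_lt _ _ (by right; push_cast; omega)]
        simp

/-- `choose (2m) (m+s)` is antitone in `s`. -/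
lemma choose_anti (m : ℕ) : ∀ s₁ s₂ : ℕ, s₁ ≤ s₂ →
    (2*m).choose (m+s₂) ≤ (2*m).choose (m+s₁) := by
  have step : ∀ s : ℕ, (2*m).choose (m+(s+1)) ≤ (2*m).choose (m+s) := by
    intro s
    have h := Nat.choose_succ_right_eq (2*m) (m+s)
    have h2 : (2*m).choose (m+s) * (2*m - (m+s)) ≤ (2*m).choose (m+s) * (m+s+1) :=
      Nat.mul_le_mul_left _ (by omega)
    rw [← h] at h2
    rw [← Nat.add_assoc]
    exact Nat.le_of_mul_le_mul_right h2 (Nat.succ_pos _)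
  exact fun s₁ s₂ h => antitone_nat_of_succ_le (f := fun s => (2*m).choose (m+s)) step (by omega)


/-- normalized central binomial coefficient -/
noncomputable def q (m : ℕ) : ℝ := (Nat.centralBinom m : ℝ) / 4 ^ m

lemma q_pos (m : ℕ) : 0 < q m := by
  apply div_pos (by exact_mod_cast Nat.centralBinom_pos m) (by positivity)

lemma q_succ (m : ℕ) : q (m+1) = q m * ((2*m+1) / (2*m+2)) := by
  have h := Nat.succ_mul_centralBinom_succ m
  have h' : ((m:ℝ)+1) * (Nat.centralBinom (m+1) : ℝ) = 2 * (2*m+1) * (Nat.centralBinom m : ℝ) := by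
    exact_mod_cast h
  have hm : ((m:ℝ)+1) ≠ 0 := by positivity
  have hcb : (Nat.centralBinom (m+1) : ℝ) = 2*(2*(m:ℝ)+1) * (Nat.centralBinom m : ℝ) / ((m:ℝ)+1) := by
    rw [eq_div_iff hm]; linarith [h']
  simp only [q, hcb, pow_succ]
  push_cast
  field_simp
  ring

lemma q_sq_low : ∀ m : ℕ, 1 ≤ m → 1 / (4*(m:ℝ)) ≤ (q m)^2 := by
  intro m
  induction m with
  | zero => omega
  | succ m ih =>
    intro _
    by_cases hm : 1 ≤ m
    · have h := ih hm
      rw [q_succ]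
      have hmr : (1:ℝ) ≤ m := by exact_mod_cast hm
      rw [mul_pow]
      have key : 1 / (4*((m:ℝ)+1)) ≤ (1 / (4*(m:ℝ))) * ((2*m+1)/(2*m+2))^2 := by
        rw [div_pow, div_mul_div_comm]
        rw [div_le_div_iff₀ (by positivity) (by positivity)]
        nlinarith
      have final : 1 / (4*((m:ℝ)+1)) ≤ (q m)^2 * (((2*m+1)/(2*m+2)))^2 :=
        le_trans key (mul_le_mul_of_nonneg_right h (by positivity))
      push_cast
      convert final using 2
    · have hm0 : m = 0 := by omega
      subst hm0
      have : Nat.centralBinom 1 = 2 := by decide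
      simp only [q, this]
      norm_num

lemma q_sq_high : ∀ m : ℕ, (q m)^2 ≤ 1 / (3*(m:ℝ)+1) := by
  intro m
  induction m with
  | zero => simp [q, Nat.centralBinom_zero]
  | succ m ih =>
    rw [q_succ, mul_pow]
    have key : (1 / (3*(m:ℝ)+1)) * ((2*m+1)/(2*m+2))^2 ≤ 1 / (3*((m:ℝ)+1)+1) := by
      rw [div_pow, div_mul_div_comm]
      rw [div_le_div_iff₀ (by positivity) (by positivity)]
      nlinarith [Nat.cast_nonneg (α := ℝ) m]
    calc (q m)^2 * ((2*(m:ℝ)+1)/(2*m+2))^2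
        ≤ (1 / (3*(m:ℝ)+1)) * ((2*m+1)/(2*m+2))^2 := by
          apply mul_le_mul_of_nonneg_right ih (by positivity)
      _ ≤ 1 / (3*((m:ℝ)+1)+1) := key
      _ = 1 / (3*(↑(m+1):ℝ)+1) := by push_cast; ring

lemma q_low (m : ℕ) (hm : 1 ≤ m) : 1 / (2 * Real.sqrt m) ≤ q m := by
  have h := q_sq_low m hm
  have hmr : (0:ℝ) < m := by exact_mod_cast hm
  have hs : (0:ℝ) < Real.sqrt m := Real.sqrt_pos.mpr hmr
  rw [div_le_iff₀ (by positivity)]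
  set x := q m * (2 * Real.sqrt m) with hx
  have hx0 : (0:ℝ) ≤ x := by rw [hx]; exact mul_nonneg (le_of_lt (q_pos m)) (by positivity)
  have s2 : Real.sqrt m ^ 2 = (m:ℝ) := Real.sq_sqrt (le_of_lt hmr)
  rw [div_le_iff₀ (show (0:ℝ) < 4*(m:ℝ) by linarith)] at h
  have hx2 : 1 ≤ x^2 := by
    have hx2' : x^2 = (q m)^2 * (4 * (m:ℝ)) := by
      rw [hx, mul_pow, mul_pow, s2]; ring
    rw [hx2']; linarith
  nlinarith [hx2, hx0]

lemma q_high (m : ℕ) (hm : 1 ≤ m) : q m ≤ 1 / Real.sqrt (2*m) := by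
  have h := q_sq_high m
  have hmr : (0:ℝ) < m := by exact_mod_cast hm
  have hs : (0:ℝ) < Real.sqrt (2*m) := Real.sqrt_pos.mpr (by positivity)
  rw [le_div_iff₀ hs]
  set y := q m * Real.sqrt (2*m) with hy
  have s2 : Real.sqrt (2*m) ^ 2 = 2*(m:ℝ) := Real.sq_sqrt (by positivity)
  have hy2 : y^2 ≤ 1 := by
    have hy2' : y^2 = (q m)^2 * (2*(m:ℝ)) := by rw [hy, mul_pow, s2]
    rw [hy2']
    have h2 : (q m)^2 * (2*(m:ℝ)) ≤ (1 / (3*(m:ℝ)+1)) * (2*m) :=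
      mul_le_mul_of_nonneg_right h (by positivity)
    have h3 : (1 / (3*(m:ℝ)+1)) * (2*m) ≤ 1 := by
      rw [div_mul_eq_mul_div, div_le_one (by positivity)]; linarith
    linarith
  nlinarith [sq_nonneg (y - 1)]


lemma choose_ratio_low (m : ℕ) : ∀ s : ℕ, s ≤ m →
    (Nat.centralBinom m : ℝ) * (((m:ℝ)-s)/((m:ℝ)+s))^s ≤ ((2*m).choose (m+s) : ℝ) := by
  intro s
  induction s with
  | zero =>
    intro _
    simp [Nat.centralBinom]
  | succ s ih =>
    intro hs
    have hs' : s ≤ m := by omega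
    have hmr : (0:ℝ) < m := by exact_mod_cast (show 0 < m by omega)
    have hsr : (s:ℝ) + 1 ≤ m := by exact_mod_cast hs
    have hsr0 : (0:ℝ) ≤ s := by positivity
    push_cast
    -- ratio identity
    have hid : ((2*m).choose (m+s+1) : ℝ) * ((m:ℝ)+s+1) = ((2*m).choose (m+s) : ℝ) * ((m:ℝ)-s) := by
      have h := Nat.choose_succ_right_eq (2*m) (m+s)
      have h2 : 2*m - (m+s) = m - s := by omega
      rw [h2] at h
      have hc : (((2*m).choose (m+s+1) * (m+s+1) : ℕ) : ℝ) = (((2*m).choose (m+s) * (m-s) : ℕ) : ℝ) := by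
        exact_mod_cast congrArg (Nat.cast (R := ℝ)) h
      push_cast [Nat.cast_sub hs'] at hc
      linarith [hc]
    have hch : ((2*m).choose (m+(s+1)) : ℝ) = ((2*m).choose (m+s) : ℝ) * (((m:ℝ)-s)/((m:ℝ)+s+1)) := by
      rw [← Nat.add_assoc, ← mul_div_assoc, eq_div_iff (show ((m:ℝ)+s+1) ≠ 0 by positivity)]
      linarith [hid]
    rw [hch]
    have h1 : (0:ℝ) ≤ ((m:ℝ)-((s:ℝ)+1))/((m:ℝ)+((s:ℝ)+1)) := by
      apply div_nonneg (by linarith) (by positivity)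
    have h2 : ((m:ℝ)-((s:ℝ)+1))/((m:ℝ)+((s:ℝ)+1)) ≤ ((m:ℝ)-s)/((m:ℝ)+s) := by
      rw [div_le_div_iff₀ (by linarith) (by linarith)]
      nlinarith
    have h3 : ((m:ℝ)-((s:ℝ)+1))/((m:ℝ)+((s:ℝ)+1)) ≤ ((m:ℝ)-s)/((m:ℝ)+s+1) := by
      rw [div_le_div_iff₀ (by linarith) (by linarith)]
      nlinarith
    have key : (((m:ℝ)-((s:ℝ)+1))/((m:ℝ)+((s:ℝ)+1)))^(s+1) ≤ (((m:ℝ)-s)/((m:ℝ)+s))^s * (((m:ℝ)-s)/((m:ℝ)+s+1)) := by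
      rw [pow_succ]
      exact mul_le_mul (pow_le_pow_left₀ h1 h2 s) h3 h1 (pow_nonneg (div_nonneg (by linarith) (by linarith)) s)
    have hcb : (0:ℝ) ≤ (Nat.centralBinom m : ℝ) := by positivity
    calc (Nat.centralBinom m : ℝ) * (((m:ℝ)-((s:ℝ)+1))/((m:ℝ)+((s:ℝ)+1)))^(s+1)
        ≤ (Nat.centralBinom m : ℝ) * ((((m:ℝ)-s)/((m:ℝ)+s))^s * (((m:ℝ)-s)/((m:ℝ)+s+1))) :=
          mul_le_mul_of_nonneg_left key hcb
      _ = ((Nat.centralBinom m : ℝ) * (((m:ℝ)-s)/((m:ℝ)+s))^s) * (((m:ℝ)-s)/((m:ℝ)+s+1)) := by ring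
      _ ≤ ((2*m).choose (m+s) : ℝ) * (((m:ℝ)-s)/((m:ℝ)+s+1)) := by
          apply mul_le_mul_of_nonneg_right (ih hs') (by apply div_nonneg <;> linarith)

lemma bernoulli_half (m s : ℕ) (h : 4*s^2 ≤ m) :
    (1:ℝ)/2 ≤ (((m:ℝ)-s)/((m:ℝ)+s))^s := by
  rcases Nat.eq_zero_or_pos s with hs | hs
  · subst hs; norm_num
  · have hm4 : 4 ≤ m := by nlinarith
    have hmr : (4:ℝ)*(s:ℝ)^2 ≤ m := by exact_mod_cast h
    have hsr : (1:ℝ) ≤ s := by exact_mod_cast hs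
    have hden : (0:ℝ) < (m:ℝ)+s := by positivity
    set a : ℝ := -2*(s:ℝ)/((m:ℝ)+s) with ha
    have h1a : 1 + a = ((m:ℝ)-s)/((m:ℝ)+s) := by
      rw [ha]; field_simp; ring
    have ha2 : -2 ≤ a := by
      rw [ha, neg_mul, neg_div, neg_le_neg_iff]
      rw [div_le_iff₀ hden]
      nlinarith
    have hber := one_add_mul_le_pow ha2 s
    rw [h1a] at hber
    have hlow : (1:ℝ)/2 ≤ 1 + (s:ℝ)*a := by
      rw [ha]
      have : (s:ℝ) * (-2*(s:ℝ)/((m:ℝ)+s)) = -(2*(s:ℝ)^2/((m:ℝ)+s)) := by ring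
      rw [this]
      have hb : 2*(s:ℝ)^2/((m:ℝ)+s) ≤ 1/2 := by
        rw [div_le_div_iff₀ hden (by norm_num)]
        nlinarith
      linarith
    linarith

lemma term_low (m s : ℕ) (h : 4*s^2 ≤ m) :
    (Nat.centralBinom m : ℝ)/2 ≤ ((2*m).choose (m+s) : ℝ) := by
  have hsm : s ≤ m := by nlinarith [Nat.zero_le s]
  calc (Nat.centralBinom m : ℝ)/2
      = (Nat.centralBinom m : ℝ) * (1/2) := by ring
    _ ≤ (Nat.centralBinom m : ℝ) * (((m:ℝ)-s)/((m:ℝ)+s))^s := by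
        apply mul_le_mul_of_nonneg_left (bernoulli_half m s h) (by positivity)
    _ ≤ ((2*m).choose (m+s) : ℝ) := choose_ratio_low m s hsm

lemma sum_sym_bound (m : ℕ) :
    Nat.centralBinom m + 2 * ∑ r ∈ Finset.Icc 1 m, (2*m).choose (m+r) ≤ 4^m := by
  have e1 : ∑ i ∈ Finset.range (2*m+1), (2*m).choose i = 4^m := by
    rw [Nat.sum_range_choose]
    rw [show (4:ℕ) = 2^2 by norm_num, ← pow_mul]
  have hsplit : ∑ i ∈ Finset.Ico 0 m, (2*m).choose i + ∑ i ∈ Finset.Ico m (2*m+1), (2*m).choose i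
      = ∑ i ∈ Finset.range (2*m+1), (2*m).choose i := by
    rw [Finset.range_eq_Ico]
    exact Finset.sum_Ico_consecutive _ (Nat.zero_le m) (by omega)
  have hbot : ∑ i ∈ Finset.Ico m (2*m+1), (2*m).choose i
      = (2*m).choose m + ∑ i ∈ Finset.Ico (m+1) (2*m+1), (2*m).choose i :=
    Finset.sum_eq_sum_Ico_succ_bot (by omega) _
  have hre1 : ∑ i ∈ Finset.Ico (m+1) (2*m+1), (2*m).choose i
      = ∑ r ∈ Finset.Icc 1 m, (2*m).choose (m+r) := by
    apply Finset.sum_nbij' (fun i => i - m) (fun r => m + r)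
    · intro a ha; simp only [Finset.mem_Ico] at ha; simp only [Finset.mem_Icc]; omega
    · intro a ha; simp only [Finset.mem_Icc] at ha; simp only [Finset.mem_Ico]; omega
    · intro a ha; simp only [Finset.mem_Ico] at ha; omega
    · intro a ha; simp only [Finset.mem_Icc] at ha; omega
    · intro a ha; simp only [Finset.mem_Ico] at ha
      congr 1; omega
  have hre2 : ∑ i ∈ Finset.Ico 0 m, (2*m).choose i
      = ∑ r ∈ Finset.Icc 1 m, (2*m).choose (m+r) := by
    apply Finset.sum_nbij' (fun i => m - i) (fun r => m - r)
    · intro a ha; simp only [Finset.mem_Ico] at ha; simp only [Finset.mem_Icc]; omega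
    · intro a ha; simp only [Finset.mem_Icc] at ha; simp only [Finset.mem_Ico]; omega
    · intro a ha; simp only [Finset.mem_Ico] at ha; omega
    · intro a ha; simp only [Finset.mem_Icc] at ha; omega
    · intro a ha; simp only [Finset.mem_Ico] at ha
      rw [show m + (m - a) = 2*m - a by omega, Nat.choose_symm (by omega)]
  have : Nat.centralBinom m = (2*m).choose m := rfl
  omega

lemma sum_spaced (m t : ℕ) (ht : 1 ≤ t) : ∀ K : ℕ,
    t * ∑ k ∈ Finset.Icc 1 K, (2*m).choose (m + t*k) ≤ ∑ s ∈ Finset.Icc 1 (t*K), (2*m).choose (m+s) := by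
  intro K
  induction K with
  | zero => simp
  | succ K ih =>
    rw [Finset.sum_Icc_succ_top (by omega)]
    have hsplit : ∑ s ∈ Finset.Ico 1 (t*K+1), (2*m).choose (m+s)
        + ∑ s ∈ Finset.Ico (t*K+1) (t*(K+1)+1), (2*m).choose (m+s)
        = ∑ s ∈ Finset.Ico 1 (t*(K+1)+1), (2*m).choose (m+s) :=
      Finset.sum_Ico_consecutive _ (by omega) (by nlinarith)
    have hblock : t * (2*m).choose (m + t*(K+1)) ≤ ∑ s ∈ Finset.Ico (t*K+1) (t*(K+1)+1), (2*m).choose (m+s) := by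
      have hcard : (Finset.Ico (t*K+1) (t*(K+1)+1)).card = t := by
        rw [Nat.card_Ico]; ring_nf; omega
      calc t * (2*m).choose (m + t*(K+1))
          = (Finset.Ico (t*K+1) (t*(K+1)+1)).card • (2*m).choose (m + t*(K+1)) := by
            rw [hcard, smul_eq_mul]
        _ ≤ ∑ s ∈ Finset.Ico (t*K+1) (t*(K+1)+1), (2*m).choose (m+s) := by
            apply Finset.card_nsmul_le_sum
            intro x hx
            simp only [Finset.mem_Ico] at hx
            exact choose_anti m x (t*(K+1)) (by omega)
    have h1 : ∑ s ∈ Finset.Icc 1 (t*K), (2*m).choose (m+s) = ∑ s ∈ Finset.Ico 1 (t*K+1), (2*m).choose (m+s) := by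
      congr 1
    have h2 : ∑ s ∈ Finset.Icc 1 (t*(K+1)), (2*m).choose (m+s) = ∑ s ∈ Finset.Ico 1 (t*(K+1)+1), (2*m).choose (m+s) := by
      congr 1
    rw [h2, ← hsplit, Nat.mul_add]
    rw [h1] at ih
    omega


lemma main_real (m t : ℕ) (hm : 1 ≤ m) (ht : 1 ≤ t) :
    1/(4 * min (Real.sqrt (2*m)) (2*(t:ℝ))) ≤
      (((2*m).choose m + 2 * ∑ k ∈ Finset.Icc 1 (m/t), (2*m).choose (m + t*k) : ℕ) : ℝ)/4^m ∧
    (((2*m).choose m + 2 * ∑ k ∈ Finset.Icc 1 (m/t), (2*m).choose (m + t*k) : ℕ) : ℝ)/4^m ≤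
      4/min (Real.sqrt (2*m)) (2*(t:ℝ)) := by
  have hmr : (1:ℝ) ≤ m := by exact_mod_cast hm
  have htr : (1:ℝ) ≤ t := by exact_mod_cast ht
  have h4m : (0:ℝ) < 4^m := by positivity
  have hs2m : (0:ℝ) < Real.sqrt (2*m) := Real.sqrt_pos.mpr (by linarith)
  have hsm : (0:ℝ) < Real.sqrt m := Real.sqrt_pos.mpr (by linarith)
  have hsmle : Real.sqrt m ≤ Real.sqrt (2*m) := Real.sqrt_le_sqrt (by linarith)
  have hcb : Nat.centralBinom m = (2*m).choose m := rfl
  set K := m / t with hK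
  set B := ∑ k ∈ Finset.Icc 1 K, (2*m).choose (m + t*k) with hB
  set A := (2*m).choose m + 2 * B with hA
  -- upper bound pieces
  have hup : ((A:ℕ) : ℝ)/4^m ≤ 1/Real.sqrt (2*m) + 1/t := by
    have step1 : t * B ≤ ∑ s ∈ Finset.Icc 1 (t*K), (2*m).choose (m+s) := sum_spaced m t ht K
    have step2 : ∑ s ∈ Finset.Icc 1 (t*K), (2*m).choose (m+s) ≤ ∑ s ∈ Finset.Icc 1 m, (2*m).choose (m+s) := by
      apply Finset.sum_le_sum_of_subset
      apply Finset.Icc_subset_Icc_right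
      rw [Nat.mul_comm]
      exact Nat.div_mul_le_self m t
    have step3 := sum_sym_bound m
    have hN : 2 * (t * B) ≤ 4^m := by omega
    have hN2 : t * (2 * B) ≤ 4^m := by rw [Nat.mul_left_comm]; exact hN
    have hNr : (t:ℝ) * (2 * B) ≤ 4^m := by exact_mod_cast hN2
    have h2B : ((2*B : ℕ):ℝ) ≤ 4^m / t := by
      rw [le_div_iff₀ (by linarith)]
      push_cast
      nlinarith
    have hq := q_high m hm
    have hAr : ((A:ℕ):ℝ) = ((2*m).choose m : ℝ) + ((2*B:ℕ):ℝ) := by push_cast [hA]; ring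
    rw [hAr, add_div]
    have e1 : ((2*m).choose m : ℝ)/4^m ≤ 1/Real.sqrt (2*m) := by
      rw [← hcb]; exact hq
    have e2 : ((2*B:ℕ):ℝ)/4^m ≤ 1/t := by
      rw [div_le_div_iff₀ h4m (by linarith)]
      rw [le_div_iff₀ (by linarith)] at h2B
      linarith
    linarith
  -- lower bound pieces
  have hcb4 : ((2*m).choose m : ℝ)/4^m = q m := by rw [← hcb]; rfl
  set K' := Nat.sqrt m / (2*t) with hK'
  have hK'K : K' ≤ K := by
    rw [hK', hK]
    calc Nat.sqrt m / (2*t) ≤ m / (2*t) := Nat.div_le_div_right (Nat.sqrt_le_self m)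
      _ ≤ m / t := Nat.div_le_div_left (by omega) ht
  have hterm : ∀ k ∈ Finset.Icc 1 K', ((Nat.centralBinom m : ℝ))/2 ≤ ((2*m).choose (m + t*k) : ℝ) := by
    intro k hk
    simp only [Finset.mem_Icc] at hk
    apply term_low
    have h1 : 2*t*k ≤ 2*t*K' := by
      apply Nat.mul_le_mul_left
      exact hk.2
    have h2 : 2*t*K' ≤ Nat.sqrt m := by
      rw [hK', Nat.mul_comm]
      exact Nat.div_mul_le_self (Nat.sqrt m) (2*t)
    have h3 : Nat.sqrt m * Nat.sqrt m ≤ m := Nat.sqrt_le m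
    calc 4*(t*k)^2 = (2*t*k) * (2*t*k) := by ring
      _ ≤ Nat.sqrt m * Nat.sqrt m := Nat.mul_le_mul (le_trans h1 h2) (le_trans h1 h2)
      _ ≤ m := h3
  have hBlow : (K' : ℝ) * ((Nat.centralBinom m : ℝ)/2) ≤ (B : ℝ) := by
    have h1 : (K' : ℝ) * ((Nat.centralBinom m : ℝ)/2) ≤ ∑ k ∈ Finset.Icc 1 K', ((2*m).choose (m + t*k) : ℝ) := by
      have := Finset.card_nsmul_le_sum (Finset.Icc 1 K') (fun k => ((2*m).choose (m + t*k) : ℝ))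
        (((Nat.centralBinom m : ℝ))/2) hterm
      rwa [Nat.card_Icc, nsmul_eq_mul, Nat.add_sub_cancel] at this
    have h2 : ∑ k ∈ Finset.Icc 1 K', ((2*m).choose (m + t*k) : ℝ) ≤ (B : ℝ) := by
      rw [hB]
      push_cast
      apply Finset.sum_le_sum_of_subset_of_nonneg
      · exact Finset.Icc_subset_Icc_right hK'K
      · intro i _ _; positivity
    linarith
  have hAlow : q m * (1 + K') ≤ ((A:ℕ):ℝ)/4^m := by
    have hAr : ((A:ℕ):ℝ) = ((2*m).choose m : ℝ) + 2 * (B:ℝ) := by push_cast [hA]; ring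
    have hcbA : ((2*m).choose m : ℝ) * (1 + K') ≤ ((A:ℕ):ℝ) := by
      rw [hAr, ← hcb]
      nlinarith [hBlow]
    rw [← hcb4, div_mul_eq_mul_div, div_le_div_iff₀ h4m h4m]
    exact mul_le_mul_of_nonneg_right hcbA (le_of_lt h4m)
  have hAlow1 : q m ≤ ((A:ℕ):ℝ)/4^m := by
    have hK'0 : (0:ℝ) ≤ K' := by positivity
    nlinarith [hAlow, q_pos m]
  have hK'1 : Real.sqrt m / (2*(t:ℝ)) ≤ (K':ℝ) + 1 := by
    have h1 : Nat.sqrt m < (K' + 1) * (2*t) := by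
      rw [hK']
      exact (Nat.div_lt_iff_lt_mul (show 0 < 2*t by omega)).mp (Nat.lt_succ_self _)
    have h2 : Real.sqrt m ≤ (Nat.sqrt m : ℝ) + 1 := by
      have h3 : (m:ℝ) ≤ ((Nat.sqrt m : ℝ) + 1)^2 := by
        have h4 : m ≤ (Nat.sqrt m + 1) * (Nat.sqrt m + 1) :=
          le_of_lt (by simpa [Nat.succ_eq_add_one] using Nat.lt_succ_sqrt m)
        have h5 : (m:ℝ) ≤ ((Nat.sqrt m + 1 : ℕ) : ℝ) * ((Nat.sqrt m + 1 : ℕ) : ℝ) := by exact_mod_cast h4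
        push_cast at h5
        nlinarith [h5]
      calc Real.sqrt m ≤ Real.sqrt (((Nat.sqrt m : ℝ) + 1)^2) := Real.sqrt_le_sqrt h3
        _ = (Nat.sqrt m : ℝ) + 1 := Real.sqrt_sq (by positivity)
    have h1r : ((Nat.sqrt m : ℕ):ℝ) + 1 ≤ ((K':ℝ) + 1) * (2*t) := by
      have : (Nat.sqrt m + 1 : ℕ) ≤ (K' + 1) * (2*t) := by omega
      exact_mod_cast this
    rw [div_le_iff₀ (by linarith)]
    linarith
  have hql := q_low m hm
  -- now case on min
  rcases min_cases (Real.sqrt (2*m)) (2*(t:ℝ)) with ⟨hmin, hcase⟩ | ⟨hmin, hcase⟩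
  · rw [hmin]
    constructor
    · have e1 : 1/(4 * Real.sqrt (2*m)) ≤ 1/(2 * Real.sqrt m) := by
        apply one_div_le_one_div_of_le (by linarith)
        linarith
      linarith [hAlow1]
    · have e2 : 1/(t:ℝ) ≤ 2/Real.sqrt (2*m) := by
        rw [div_le_div_iff₀ (by linarith) hs2m]
        linarith
      have e3 : 1/Real.sqrt (2*m) + 1/(t:ℝ) ≤ 4/Real.sqrt (2*m) := by
        have : (1:ℝ)/Real.sqrt (2*m) + 2/Real.sqrt (2*m) ≤ 4/Real.sqrt (2*m) := by
          rw [← add_div, div_le_div_iff₀ hs2m hs2m]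
          nlinarith
        linarith
      linarith [hup]
  · rw [hmin]
    have h2t : (0:ℝ) < 2*t := by linarith
    constructor
    · have key : 1/(4*(t:ℝ)) ≤ q m * (1 + K') := by
        have hqn : 0 < q m := q_pos m
        have e1 : (1:ℝ)/(2 * Real.sqrt m) * (Real.sqrt m / (2*(t:ℝ))) ≤ q m * (1 + K') := by
          rw [add_comm (1:ℝ)]
          apply mul_le_mul hql hK'1 (by positivity) (le_of_lt hqn)
        have e2 : (1:ℝ)/(2 * Real.sqrt m) * (Real.sqrt m / (2*(t:ℝ))) = 1/(4*(t:ℝ)) := by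
          field_simp
          ring
        linarith [e1, e2.symm.le]
      have e3 : 1/(4 * (2*(t:ℝ))) ≤ 1/(4*(t:ℝ)) := by
        apply one_div_le_one_div_of_le (by linarith)
        linarith
      linarith [hAlow]
    · have e1 : 1/Real.sqrt (2*m) ≤ 1/(2*(t:ℝ)) := one_div_le_one_div_of_le h2t (le_of_lt hcase)
      have e2 : 1/(t:ℝ) = 2/(2*(t:ℝ)) := by field_simp
      have e3 : 1/(2*(t:ℝ)) + 2/(2*(t:ℝ)) ≤ 4/(2*(t:ℝ)) := by
        rw [← add_div, div_le_div_iff₀ h2t h2t]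
        nlinarith
      linarith [hup]


variable {P : Measure Ω} {S : ℕ → Ω → ℤ}

lemma meas_X (hS : IsSRW P S) (i : ℕ) : Measurable (fun ω => S (i+1) ω - S i ω) :=
  (hS.meas _).sub (hS.meas _)

lemma null_X (hS : IsSRW P S) (i : ℕ) :
    P {ω | S (i+1) ω - S i ω ≠ 1 ∧ S (i+1) ω - S i ω ≠ -1} = 0 := by
  haveI := hS.prob
  set A := {ω | S (i+1) ω - S i ω = 1} with hA
  set B := {ω | S (i+1) ω - S i ω = -1} with hB
  have hmA : MeasurableSet A := (meas_X hS i) (measurableSet_singleton 1)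
  have hmB : MeasurableSet B := (meas_X hS i) (measurableSet_singleton (-1))
  have hdisj : Disjoint A B := by
    rw [Set.disjoint_left]
    intro ω h1 h2
    rw [hA, Set.mem_setOf_eq] at h1
    rw [hB, Set.mem_setOf_eq] at h2
    omega
  have hunion : P (A ∪ B) = 1 := by
    rw [measure_union hdisj hmB, hS.step_pos i, hS.step_neg i]
    rw [ENNReal.div_add_div_same]
    rw [one_add_one_eq_two]
    exact ENNReal.div_self two_ne_zero ENNReal.ofNat_ne_top
  have hcompl : {ω | S (i+1) ω - S i ω ≠ 1 ∧ S (i+1) ω - S i ω ≠ -1} = (A ∪ B)ᶜ := by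
    ext ω
    simp [hA, hB, Set.mem_setOf_eq]
  rw [hcompl, measure_compl (hmA.union hmB) (measure_ne_top P _), hunion, measure_univ,
    tsub_self]

lemma indep_snxn (hS : IsSRW P S) (n : ℕ) :
    IndepFun (S n) (fun ω => S (n+1) ω - S n ω) P := by
  have hsum : S n = ∑ i ∈ Finset.range n, (fun ω => S (i+1) ω - S i ω) := by
    funext ω
    rw [Finset.sum_apply]
    have := Finset.sum_range_sub (fun i => S i ω) n
    rw [this, hS.init ω, sub_zero]
  have h := hS.indep.indepFun_finsetSum_of_notMem (meas_X hS)
    (Finset.notMem_range_self (n := n))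
  rwa [← hsum] at h

lemma step_prob (hS : IsSRW P S) (n : ℕ) (j : ℤ) :
    P {ω | S (n+1) ω = j} =
      P {ω | S n ω = j-1} * (1/2) + P {ω | S n ω = j+1} * (1/2) := by
  haveI := hS.prob
  set X := fun ω => S (n+1) ω - S n ω with hX
  set A1 := {ω | S n ω = j-1} ∩ {ω | X ω = 1} with hA1
  set A2 := {ω | S n ω = j+1} ∩ {ω | X ω = -1} with hA2
  set N := {ω | X ω ≠ 1 ∧ X ω ≠ -1} with hN
  have hmS : ∀ c : ℤ, MeasurableSet {ω | S n ω = c} :=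
    fun c => (hS.meas n) (measurableSet_singleton c)
  have hmX : ∀ c : ℤ, MeasurableSet {ω | X ω = c} :=
    fun c => (meas_X hS n) (measurableSet_singleton c)
  have hsub1 : {ω | S (n+1) ω = j} ⊆ A1 ∪ A2 ∪ N := by
    intro ω hω
    rw [Set.mem_setOf_eq] at hω
    by_cases h1 : X ω = 1
    · left; left
      constructor
      · rw [Set.mem_setOf_eq]; rw [hX] at h1; simp only at h1; omega
      · exact h1
    · by_cases h2 : X ω = -1
      · left; right
        constructor
        · rw [Set.mem_setOf_eq]; rw [hX] at h2; simp only at h2; omega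
        · exact h2
      · right; exact ⟨h1, h2⟩
  have hsub2 : A1 ∪ A2 ⊆ {ω | S (n+1) ω = j} := by
    intro ω hω
    rw [Set.mem_setOf_eq]
    rcases hω with ⟨h1, h2⟩ | ⟨h1, h2⟩ <;>
      (rw [Set.mem_setOf_eq] at h1 h2; rw [hX] at h2; simp only at h2; omega)
  have heq : P {ω | S (n+1) ω = j} = P (A1 ∪ A2) := by
    apply le_antisymm
    · calc P {ω | S (n+1) ω = j} ≤ P (A1 ∪ A2 ∪ N) := measure_mono hsub1
        _ ≤ P (A1 ∪ A2) + P N := measure_union_le _ _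
        _ = P (A1 ∪ A2) := by rw [null_X hS n, add_zero]
    · exact measure_mono hsub2
  have hdisj : Disjoint A1 A2 := by
    rw [Set.disjoint_left]
    rintro ω ⟨_, h1⟩ ⟨_, h2⟩
    rw [Set.mem_setOf_eq] at h1 h2
    omega
  have hind := indep_snxn hS n
  have e1 : P A1 = P {ω | S n ω = j-1} * (1/2) := by
    have := hind.measure_inter_preimage_eq_mul {j-1} {1}
      (measurableSet_singleton _) (measurableSet_singleton _)
    rw [hA1]
    rw [show {ω | S n ω = j-1} ∩ {ω | X ω = 1} = S n ⁻¹' {j-1} ∩ X ⁻¹' {1} from rfl, this]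
    rw [show X ⁻¹' {1} = {ω | S (n+1) ω - S n ω = 1} from rfl, hS.step_pos n]
    rfl
  have e2 : P A2 = P {ω | S n ω = j+1} * (1/2) := by
    have := hind.measure_inter_preimage_eq_mul {j+1} {-1}
      (measurableSet_singleton _) (measurableSet_singleton _)
    rw [hA2]
    rw [show {ω | S n ω = j+1} ∩ {ω | X ω = -1} = S n ⁻¹' {j+1} ∩ X ⁻¹' {-1} from rfl, this]
    rw [show X ⁻¹' {-1} = {ω | S (n+1) ω - S n ω = -1} from rfl, hS.step_neg n]
    rfl
  rw [heq, measure_union hdisj ((hmS _).inter (hmX _)), e1, e2]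

lemma point_prob (hS : IsSRW P S) : ∀ (n : ℕ) (j : ℤ),
    P {ω | S n ω = j} = (w n j : ℝ≥0∞) / 2^n := by
  haveI := hS.prob
  intro n
  induction n with
  | zero =>
    intro j
    by_cases hj : j = 0
    · subst hj
      have : {ω | S 0 ω = 0} = Set.univ := by
        ext ω; simp [hS.init ω]
      rw [this, measure_univ]
      simp [w]
    · have : {ω | S 0 ω = j} = ∅ := by
        ext ω; simp [hS.init ω]; omega
      rw [this, measure_empty]
      simp [w, hj]
  | succ n ih =>
    intro j
    rw [step_prob hS n j, ih (j-1), ih (j+1)]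
    have h2 : ((2:ℝ≥0∞))^n ≠ 0 := by positivity
    have h2t : ((2:ℝ≥0∞))^n ≠ ⊤ := by
      exact ENNReal.pow_ne_top ENNReal.ofNat_ne_top
    show _ = ((w n (j-1) + w n (j+1) : ℕ) : ℝ≥0∞) / 2^(n+1)
    push_cast
    rw [ENNReal.add_div]
    congr 1 <;>
    · rw [div_eq_mul_inv, div_eq_mul_inv, one_mul, mul_assoc,
        ← ENNReal.mul_inv (Or.inl (by positivity)) (Or.inr (by norm_num)), pow_succ,
        ← div_eq_mul_inv]


lemma dvd_prob (hS : IsSRW P S) (n : ℕ) (T : ℕ) :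
    P {ω | (T:ℤ) ∣ S n ω} =
      ∑ j ∈ (Finset.Icc (-(n:ℤ)) n).filter (fun j => (T:ℤ) ∣ j), (w n j : ℝ≥0∞) / 2^n := by
  haveI := hS.prob
  classical
  set N := ⋃ i ∈ Finset.range n, {ω | S (i+1) ω - S i ω ≠ 1 ∧ S (i+1) ω - S i ω ≠ -1} with hN
  have hNnull : P N = 0 := by
    rw [hN]
    apply measure_biUnion_null_iff (Finset.range n).countable_toSet |>.mpr
    intro i _
    exact null_X hS i
  have hbound : ∀ ω, ω ∉ N → |S n ω| ≤ n := by
    intro ω hω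
    have hstep : ∀ i ∈ Finset.range n, |S (i+1) ω - S i ω| ≤ 1 := by
      intro i hi
      by_contra h
      apply hω
      rw [hN]
      refine Set.mem_biUnion hi ?_
      rw [Set.mem_setOf_eq]
      constructor <;> intro heq <;> rw [heq] at h <;> simp at h
    have hsum : S n ω = ∑ i ∈ Finset.range n, (S (i+1) ω - S i ω) := by
      rw [Finset.sum_range_sub (fun i => S i ω), hS.init ω, sub_zero]
    rw [hsum]
    calc |∑ i ∈ Finset.range n, (S (i+1) ω - S i ω)|
        ≤ ∑ i ∈ Finset.range n, |S (i+1) ω - S i ω| := Finset.abs_sum_le_sum_abs _ _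
      _ ≤ ∑ _i ∈ Finset.range n, 1 := Finset.sum_le_sum hstep
      _ = n := by simp
  set fs := (Finset.Icc (-(n:ℤ)) n).filter (fun j => (T:ℤ) ∣ j) with hfs
  set U := ⋃ j ∈ fs, {ω | S n ω = j} with hU
  have hU1 : U ⊆ {ω | (T:ℤ) ∣ S n ω} := by
    intro ω hω
    rw [hU] at hω
    simp only [Set.mem_iUnion, exists_prop] at hω
    obtain ⟨j, hj, hωj⟩ := hω
    rw [hfs, Finset.mem_filter] at hj
    rw [Set.mem_setOf_eq] at hωj ⊢
    rw [hωj]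
    exact hj.2
  have hU2 : {ω | (T:ℤ) ∣ S n ω} ⊆ U ∪ N := by
    intro ω hω
    by_cases hωN : ω ∈ N
    · right; exact hωN
    · left
      rw [hU]
      simp only [Set.mem_iUnion, exists_prop]
      refine ⟨S n ω, ?_, rfl⟩
      rw [hfs, Finset.mem_filter, Finset.mem_Icc]
      have h2 := abs_le.mp (hbound ω hωN)
      exact ⟨⟨h2.1, h2.2⟩, hω⟩
  have heq : P {ω | (T:ℤ) ∣ S n ω} = P U := by
    apply le_antisymm
    · calc P {ω | (T:ℤ) ∣ S n ω} ≤ P (U ∪ N) := measure_mono hU2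
        _ ≤ P U + P N := measure_union_le _ _
        _ = P U := by rw [hNnull, add_zero]
    · exact measure_mono hU1
  rw [heq, hU]
  rw [measure_biUnion_finset]
  · apply Finset.sum_congr rfl
    intro j _
    exact point_prob hS n j
  · intro j1 _ j2 _ hne
    simp only [Function.onFun]
    rw [Set.disjoint_left]
    intro ω h1 h2
    rw [Set.mem_setOf_eq] at h1 h2
    exact hne (by rw [← h1, ← h2])
  · intro j _
    exact (hS.meas n) (measurableSet_singleton j)


lemma sum_eval (m t : ℕ) (hm : 1 ≤ m) (ht : 1 ≤ t) :
    ∑ j ∈ (Finset.Icc (-((2*m:ℕ):ℤ)) ((2*m:ℕ):ℤ)).filter (fun j => ((2*t:ℕ):ℤ) ∣ j), w (2*m) j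
      = (2*m).choose m + 2 * ∑ k ∈ Finset.Icc 1 (m/t), (2*m).choose (m + t*k) := by
  classical
  set K := m / t with hK
  have htK : t * K ≤ m := by rw [hK, Nat.mul_comm]; exact Nat.div_mul_le_self m t
  have himg : (Finset.Icc (-((2*m:ℕ):ℤ)) ((2*m:ℕ):ℤ)).filter (fun j => ((2*t:ℕ):ℤ) ∣ j)
      = Finset.image (fun k : ℤ => ((2*t:ℕ):ℤ)*k) (Finset.Icc (-(K:ℤ)) (K:ℤ)) := by
    ext j
    simp only [Finset.mem_filter, Finset.mem_Icc, Finset.mem_image]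
    constructor
    · rintro ⟨⟨h1, h2⟩, k, hk⟩
      subst hk
      push_cast at h1 h2 ⊢
      have htpos : (0:ℤ) < t := by exact_mod_cast ht
      have hkt : k * t ≤ m := by nlinarith
      have hkt' : (-k) * t ≤ m := by nlinarith
      have hmlt : (m:ℤ) < ((K:ℤ)+1)*t := by
        exact_mod_cast (Nat.div_lt_iff_lt_mul (show 0 < t by omega)).mp (Nat.lt_succ_self K)
      have e1 : k ≤ (K:ℤ) := by nlinarith
      have e2 : -(K:ℤ) ≤ k := by nlinarith
      exact ⟨k, ⟨e2, e1⟩, by push_cast; ring⟩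
    · rintro ⟨k, ⟨hk1, hk2⟩, hkj⟩
      subst hkj
      have htKz : (t:ℤ) * K ≤ m := by exact_mod_cast htK
      have h1 : (t:ℤ) * k ≤ (t:ℤ) * K := by
        apply mul_le_mul_of_nonneg_left hk2 (by positivity)
      have h2 : (t:ℤ) * (-k) ≤ (t:ℤ) * K := by
        apply mul_le_mul_of_nonneg_left (by omega) (by positivity)
      refine ⟨⟨by push_cast; nlinarith, by push_cast; nlinarith⟩, Dvd.intro k rfl⟩
  rw [himg]
  rw [Finset.sum_image (fun k1 _ k2 _ h => by
    have h2t : ((2*t:ℕ):ℤ) ≠ 0 := by positivity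
    exact mul_left_cancel₀ h2t h)]
  have hsplit : ∀ c : ℕ, Finset.Icc (-(c:ℤ)) (c:ℤ) = Finset.Icc (-(c:ℤ)) (-1) ∪ Finset.Icc 0 (c:ℤ) := by
    intro c
    ext x
    simp only [Finset.mem_Icc, Finset.mem_union]
    omega
  have hdisj : ∀ c : ℕ, Disjoint (Finset.Icc (-(c:ℤ)) (-1)) (Finset.Icc 0 (c:ℤ)) := by
    intro c
    rw [Finset.disjoint_left]
    intro a ha hb
    simp only [Finset.mem_Icc] at ha hb
    omega
  rw [hsplit K, Finset.sum_union (hdisj K)]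
  have hins : ∀ c : ℕ, Finset.Icc (0:ℤ) (c:ℤ) = insert 0 (Finset.Icc 1 (c:ℤ)) := by
    intro c
    ext x
    simp only [Finset.mem_Icc, Finset.mem_insert]
    omega
  rw [hins K, Finset.sum_insert (by simp)]
  -- the positive-index sum over ℤ equals the ℕ-indexed binomial sum
  have hposval : ∑ k ∈ Finset.Icc (1:ℤ) (K:ℤ), w (2*m) (((2*t:ℕ):ℤ)*k)
      = ∑ k ∈ Finset.Icc 1 K, (2*m).choose (m + t*k) := by
    apply Finset.sum_nbij' (fun k : ℤ => k.toNat) (fun k : ℕ => (k:ℤ))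
    · intro a ha; simp only [Finset.mem_Icc] at ha ⊢; omega
    · intro a ha; simp only [Finset.mem_Icc] at ha ⊢; omega
    · intro a ha; simp only [Finset.mem_Icc] at ha; omega
    · intro a ha; simp only [Finset.mem_Icc] at ha; omega
    · intro a ha
      simp only [Finset.mem_Icc] at ha
      have hb : m + t * a.toNat ≤ 2*m := by
        have : t * a.toNat ≤ t * K := Nat.mul_le_mul_left t (by omega)
        omega
      have := w_val (2*m) (m + t * a.toNat) hb
      have harg : 2*((m + t*a.toNat : ℕ):ℤ) - ((2*m:ℕ):ℤ) = ((2*t:ℕ):ℤ)*a := by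
        push_cast [Int.toNat_of_nonneg (by omega : (0:ℤ) ≤ a)]
        ring
      rw [← harg, this]
  have hnegval : ∑ k ∈ Finset.Icc (-(K:ℤ)) (-1), w (2*m) (((2*t:ℕ):ℤ)*k)
      = ∑ k ∈ Finset.Icc (1:ℤ) (K:ℤ), w (2*m) (((2*t:ℕ):ℤ)*k) := by
    apply Finset.sum_nbij' (fun k : ℤ => -k) (fun k : ℤ => -k)
    · intro a ha; simp only [Finset.mem_Icc] at ha ⊢; omega
    · intro a ha; simp only [Finset.mem_Icc] at ha ⊢; omega
    · intro a _; ring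
    · intro a _; ring
    · intro a _
      rw [show ((2*t:ℕ):ℤ) * -a = -(((2*t:ℕ):ℤ) * a) by ring, w_symm]
  have hzeroval : w (2*m) 0 = (2*m).choose m := by
    have := w_val (2*m) m (by omega)
    rw [show 2*((m:ℕ):ℤ) - ((2*m:ℕ):ℤ) = 0 by push_cast; ring] at this
    exact this
  rw [hnegval, hposval, mul_zero, hzeroval]
  ring

end SRW16

/-- Lemma 6.6.  For the simple random walk,
`P(S_n ∈ Tℤ) ≍ 1 / min{√n, T}` uniformly over even `T` and even `n > 0`. -/
theorem statement16
    (P : Measure Ω) (S : ℕ → Ω → ℤ) (hS : IsSRW P S) :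
    ∃ C : ℝ, 0 < C ∧ ∀ T n : ℕ, Even T → 0 < T → Even n → 0 < n →
      ENNReal.ofReal (1 / (C * min (Real.sqrt (n : ℝ)) (T : ℝ))) ≤
          P {ω | (T : ℤ) ∣ S n ω} ∧
        P {ω | (T : ℤ) ∣ S n ω} ≤
          ENNReal.ofReal (C / min (Real.sqrt (n : ℝ)) (T : ℝ)) := by
  classical
  refine ⟨4, by norm_num, ?_⟩
  intro T n hTe hT hne hn
  obtain ⟨t, rfl⟩ := hTe
  obtain ⟨m, rfl⟩ := hne
  have hm1 : 1 ≤ m := by omega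
  have ht1 : 1 ≤ t := by omega
  rw [show t + t = 2*t from by ring, show m + m = 2*m from by ring] at *
  rw [SRW16.dvd_prob hS (2*m) (2*t)]
  have hcast : ∑ j ∈ (Finset.Icc (-(((2*m:ℕ)):ℤ)) ((2*m:ℕ):ℤ)).filter
        (fun j => (((2*t:ℕ)):ℤ) ∣ j), (SRW16.w (2*m) j : ℝ≥0∞)/2^(2*m)
      = ((∑ j ∈ (Finset.Icc (-(((2*m:ℕ)):ℤ)) ((2*m:ℕ):ℤ)).filter
        (fun j => (((2*t:ℕ)):ℤ) ∣ j), SRW16.w (2*m) j : ℕ) : ℝ≥0∞)/2^(2*m) := by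
    simp only [div_eq_mul_inv, ← Finset.sum_mul, Nat.cast_sum]
  rw [hcast, SRW16.sum_eval m t hm1 ht1]
  set A : ℕ := (2*m).choose m + 2 * ∑ k ∈ Finset.Icc 1 (m/t), (2*m).choose (m + t*k) with hA
  have hAof : ((A:ℕ):ℝ≥0∞)/2^(2*m) = ENNReal.ofReal ((A:ℝ)/2^(2*m)) := by
    rw [ENNReal.ofReal_div_of_pos (by positivity), ENNReal.ofReal_natCast]
    congr 1
    rw [ENNReal.ofReal_pow (by norm_num)]
    norm_num
  rw [hAof]
  have hpow : ((2:ℝ))^(2*m) = 4^m := by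
    rw [pow_mul]
    norm_num
  have hmain := SRW16.main_real m t hm1 ht1
  have hc1 : ((2*m:ℕ):ℝ) = 2*(m:ℝ) := by push_cast; ring
  have hc2 : ((2*t:ℕ):ℝ) = 2*(t:ℝ) := by push_cast; ring
  constructor
  · apply ENNReal.ofReal_le_ofReal
    rw [hc1, hc2, hpow]
    exact hmain.1
  · apply ENNReal.ofReal_le_ofReal
    rw [hc1, hc2, hpow]
    exact hmain.2

end
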